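/- arXiv:2109.06269 — 2 statements merged into one kernel-verified Lean document; each statement's English description precedes it below -/
import Mathlib

section
/- Let G be a connected graph of order n with s distinct adjacency eigenvalues, minimum degree δ(G), and let p be a positive integer with p ≤ δ(G) and s ≥ n − δ(G) + p. Then for every adjacency eigenvalue λ with multiplicity m_G(λ), the p-domination number satisfies γ_p(G) ≤ n − m_G(λ). -/
open Matrix SimpleGraph

variable {V : Type*} [Fintype V] [DecidableEq V]

/-- Adjacency matrix of a simple graph over ℝ (classically decidable). -/
noncomputable def adjM (G : SimpleGraph V) : Matrix V V ℝ :=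
  letI := Classical.decRel G.Adj
  G.adjMatrix ℝ

/-- Multiplicity of `lam` as an adjacency eigenvalue of `G`. -/
noncomputable def eigMult (G : SimpleGraph V) (lam : ℝ) : ℕ :=
  Module.finrank ℝ (LinearMap.ker (Matrix.toLin' (adjM G - lam • (1 : Matrix V V ℝ))))

/-- `D` is a dominating set of `G`. -/
def IsDomSet (G : SimpleGraph V) (D : Finset V) : Prop :=
  ∀ v ∉ D, ∃ u ∈ D, G.Adj v u

/-- Domination number. -/
noncomputable def domNum (G : SimpleGraph V) : ℕ :=
  sInf {k | ∃ D : Finset V, IsDomSet G D ∧ D.card = k}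

/-- `D` is a total dominating set of `G`. -/
def IsTotalDomSet (G : SimpleGraph V) (D : Finset V) : Prop :=
  ∀ v : V, ∃ u ∈ D, G.Adj v u

/-- Total domination number. -/
noncomputable def totalDomNum (G : SimpleGraph V) : ℕ :=
  sInf {k | ∃ D : Finset V, IsTotalDomSet G D ∧ D.card = k}

/-- `D` is a `p`-dominating set of `G`. -/
def IsPDomSet (G : SimpleGraph V) (p : ℕ) (D : Finset V) : Prop :=
  ∀ v ∉ D, p ≤ (G.neighborSet v ∩ ↑D).ncard

/-- `p`-domination number. -/
noncomputable def pDomNum (G : SimpleGraph V) (p : ℕ) : ℕ :=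
  sInf {k | ∃ D : Finset V, IsPDomSet G p D ∧ D.card = k}

/-- `X` is a star set for the eigenvalue `lam` of `G`: `lam` is an eigenvalue of `G`
with multiplicity `|X|`, and `lam` is not an eigenvalue of the induced subgraph `G - X`. -/
def IsStarSet (G : SimpleGraph V) (lam : ℝ) (X : Finset V) : Prop :=
  0 < eigMult G lam ∧ eigMult G lam = X.card ∧
    ∀ α : {v : V // v ∉ X} → ℝ,
      (Matrix.of fun i j : {v : V // v ∉ X} => adjM G i.1 j.1).mulVec α = lam • α → α = 0

/-- Minimum degree. -/
noncomputable def minDeg (G : SimpleGraph V) : ℕ :=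
  sInf {d | ∃ v : V, (G.neighborSet v).ncard = d}

/-- Number of distinct adjacency eigenvalues of `G`. -/
noncomputable def numEigs (G : SimpleGraph V) : ℕ :=
  {lam : ℝ | 0 < eigMult G lam}.ncard

/-!
Eigenvectors for the eigenvalues other than `λ` are linearly independent and span a space
meeting the `λ`-eigenspace trivially, so `m(λ) + (s - 1) ≤ n`. With `s ≥ n - δ + p` this gives
`n - m(λ) ≥ n - δ + p - 1`, and then *any* set `D` of `n - m(λ)` vertices is `p`-dominating:
a vertex outside `D` has at most `n - |D| - 1 ≤ δ - p` neighbours outside `D`, hence at least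
`p` neighbours in `D`.
-/

namespace Module.End

variable {K M : Type*} [Field K] [AddCommGroup M] [Module K M] [FiniteDimensional K M]

theorem finrank_eigenspace_add_ncard_hasEigenvalue_le (f : End K M) (μ : K) :
    finrank K (f.eigenspace μ) + {ν | f.HasEigenvalue ν}.ncard ≤ finrank K M + 1 := by
  set S : Set K := {ν | f.HasEigenvalue ν} \ {μ}
  have : Fintype S := (f.finite_hasEigenvalue.sdiff).fintype
  choose v hv using fun ν : S => ν.2.1.exists_hasEigenvector
  have hdisj : Disjoint (f.eigenspace μ) (Submodule.span K (Set.range v)) := by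
    refine (f.eigenspaces_iSupIndep μ).mono_right ?_
    rw [Submodule.span_le]
    rintro _ ⟨ν, rfl⟩
    exact Submodule.mem_iSup_of_mem ν.1 (Submodule.mem_iSup_of_mem ν.2.2 (hv ν).1)
  have hS : S.ncard = finrank K (Submodule.span K (Set.range v)) := by
    rw [finrank_span_eq_card (f.eigenvectors_linearIndependent S v hv), ← Nat.card_coe_set_eq,
      Nat.card_eq_fintype_card]
  calc finrank K (f.eigenspace μ) + {ν | f.HasEigenvalue ν}.ncard
      ≤ finrank K (f.eigenspace μ) + (S.ncard + 1) := by
        gcongr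
        exact (Set.ncard_le_ncard (Set.subset_insert_sdiff_singleton μ _)
          ((f.finite_hasEigenvalue.sdiff).insert μ)).trans (Set.ncard_insert_le μ S)
    _ ≤ finrank K M + 1 := by
        rw [hS, ← add_assoc]
        exact Nat.add_le_add_right (Submodule.finrank_add_finrank_le_of_disjoint hdisj) 1

end Module.End

section

variable (G : SimpleGraph V)

theorem eigMult_eq_finrank_eigenspace (μ : ℝ) :
    eigMult G μ = Module.finrank ℝ (Module.End.eigenspace (toLin' (adjM G)) μ) := by
  rw [eigMult, Module.End.eigenspace_def, map_sub, _root_.map_smul, toLin'_one]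
  rfl

theorem eigMult_pos_iff_hasEigenvalue (μ : ℝ) :
    0 < eigMult G μ ↔ Module.End.HasEigenvalue (toLin' (adjM G)) μ := by
  rw [eigMult_eq_finrank_eigenspace, Nat.pos_iff_ne_zero, Ne, Submodule.finrank_eq_zero,
    Module.End.hasEigenvalue_iff]

theorem eigMult_add_numEigs_le (lam : ℝ) : eigMult G lam + numEigs G ≤ Fintype.card V + 1 := by
  have h := Module.End.finrank_eigenspace_add_ncard_hasEigenvalue_le (toLin' (adjM G)) lam
  simpa only [numEigs, eigMult_pos_iff_hasEigenvalue, Module.finrank_fintype_fun_eq_card,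
    ← eigMult_eq_finrank_eigenspace] using h

omit [Fintype V] [DecidableEq V] in
theorem minDeg_le_ncard_neighborSet (v : V) : minDeg G ≤ (G.neighborSet v).ncard :=
  Nat.sInf_le ⟨v, rfl⟩

theorem isPDomSet_of_card_add_minDeg {p : ℕ} {D : Finset V}
    (hD : Fintype.card V + p ≤ D.card + minDeg G + 1) : IsPDomSet G p D := by
  intro w hw
  have hout : (G.neighborSet w \ ↑D).ncard ≤ Fintype.card V - (D.card + 1) := by
    calc (G.neighborSet w \ ↑D).ncard ≤ (↑(insert w D)ᶜ : Set V).ncard := by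
          refine Set.ncard_le_ncard ?_ (Set.toFinite _)
          rintro u ⟨huw, huD⟩
          simp only [Finset.coe_compl, Finset.coe_insert, Set.mem_compl_iff, Set.mem_insert_iff,
            not_or]
          exact ⟨(G.ne_of_adj huw).symm, huD⟩
      _ = Fintype.card V - (D.card + 1) := by
          rw [Set.ncard_coe_finset, Finset.card_compl, Finset.card_insert_of_notMem hw]
  have hsplit := Set.ncard_inter_add_ncard_sdiff_eq_ncard (G.neighborSet w) ↑D (Set.toFinite _)
  have hdeg := minDeg_le_ncard_neighborSet G w
  have hcard := Finset.card_le_univ (insert w D)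
  rw [Finset.card_insert_of_notMem hw] at hcard
  omega

omit [Fintype V] [DecidableEq V] in
theorem pDomNum_le_card {p : ℕ} {D : Finset V} (hD : IsPDomSet G p D) : pDomNum G p ≤ D.card :=
  Nat.sInf_le ⟨D, hD, rfl⟩

end

theorem stmt_11_general (G : SimpleGraph V) (p : ℕ)
    (hs : Fintype.card V - minDeg G + p ≤ numEigs G)
    (lam : ℝ) :
    pDomNum G p ≤ Fintype.card V - eigMult G lam := by
  have hmult := eigMult_add_numEigs_le G lam
  obtain ⟨D, -, hD⟩ := Finset.exists_subset_card_eq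
    (show Fintype.card V - eigMult G lam ≤ (Finset.univ : Finset V).card by simp)
  exact hD ▸ pDomNum_le_card G (isPDomSet_of_card_add_minDeg G (by omega))

theorem stmt_11 (G : SimpleGraph V) (hG : G.Connected) (p : ℕ) (hp : 0 < p)
    (hpδ : p ≤ minDeg G) (hs : Fintype.card V - minDeg G + p ≤ numEigs G)
    (lam : ℝ) (heig : 0 < eigMult G lam) :
    pDomNum G p ≤ Fintype.card V - eigMult G lam :=
  stmt_11_general G p hs lam
end

section
/- Let X be a star set for an eigenvalue λ ∉ {0, −1} of a graph G. Then the neighborhoods in V(G)\X of distinct vertices of X are distinct and non-empty. -/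
open Matrix SimpleGraph

variable {V : Type*} [Fintype V] [DecidableEq V]

/-!
No `lam`-eigenvector vanishes on a star set `X`, and the eigenspace has dimension `|X|`, so
every function on `X` extends to a `lam`-eigenvector. Extend the indicator of `u ∈ X`: the
eigenvalue equation at `u` says that `lam` is the sum of the extension over the neighbours of `u`
outside `X`, so that neighbourhood cannot be empty. Extend `𝟙_u - 𝟙_w`: if `u` and `w` have the
same neighbourhood outside `X`, subtracting the eigenvalue equations at `u` and `w` gives
`lam = -[u ~ w]`.
-/

lemma mem_ker_toLin'_adjM_sub_iff (G : SimpleGraph V) (lam : ℝ) (x : V → ℝ) :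
    x ∈ LinearMap.ker (toLin' (adjM G - lam • (1 : Matrix V V ℝ))) ↔ adjM G *ᵥ x = lam • x := by
  rw [LinearMap.mem_ker, toLin'_apply, sub_mulVec, smul_mulVec, one_mulVec, sub_eq_zero]

lemma lam_mul_apply_eq_sum_neighborFinset_filter (G : SimpleGraph V) [DecidableRel G.Adj]
    {lam : ℝ} {x f : V → ℝ} {X : Finset V} (hx : adjM G *ᵥ x = lam • x) (hxf : Set.EqOn x f X)
    {u : V} (hu : u ∈ X) :
    lam * f u = ∑ v ∈ G.neighborFinset u with v ∉ X, x v +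
      ∑ v ∈ G.neighborFinset u with v ∈ X, f v := by
  have hadj : adjM G = G.adjMatrix ℝ := by
    unfold adjM
    congr!
  have hin : ∑ v ∈ G.neighborFinset u with v ∈ X, x v = ∑ v ∈ G.neighborFinset u with v ∈ X, f v :=
    Finset.sum_congr rfl fun v hv => hxf (Finset.mem_filter.mp hv).2
  rw [← hin, ← hxf hu, add_comm, Finset.sum_filter_add_sum_filter_not, ← adjMatrix_mulVec_apply,
    ← hadj, hx, Pi.smul_apply, smul_eq_mul]

namespace IsStarSet

variable {G : SimpleGraph V} {lam : ℝ} {X : Finset V}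

lemma eq_zero_of_eqOn_zero (hX : IsStarSet G lam X) {x : V → ℝ}
    (hx : adjM G *ᵥ x = lam • x) (hx0 : Set.EqOn x 0 X) : x = 0 := by
  have hout : (fun i : {v : V // v ∉ X} => x i) = 0 := by
    refine hX.2.2 _ (funext fun i => ?_)
    have hsplit := Fintype.sum_subtype_add_sum_subtype (· ∈ X) (fun j => adjM G i j * x j)
    simp only [hx0 (Subtype.prop _), Pi.zero_apply, mul_zero, Finset.sum_const_zero,
      zero_add] at hsplit
    simpa [mulVec, dotProduct, hsplit] using congrFun hx i
  funext v
  by_cases hv : v ∈ X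
  · exact hx0 hv
  · exact congrFun hout ⟨v, hv⟩

lemma exists_eigenvector_eqOn (hX : IsStarSet G lam X) (f : V → ℝ) :
    ∃ x : V → ℝ, adjM G *ᵥ x = lam • x ∧ Set.EqOn x f X := by
  set E := LinearMap.ker (toLin' (adjM G - lam • (1 : Matrix V V ℝ)))
  let r : E →ₗ[ℝ] (X → ℝ) := (LinearMap.funLeft ℝ ℝ Subtype.val).comp E.subtype
  have hr_inj : Function.Injective r := by
    rw [← LinearMap.ker_eq_bot, LinearMap.ker_eq_bot']
    intro m hm
    exact Subtype.ext <| hX.eq_zero_of_eqOn_zero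
      ((mem_ker_toLin'_adjM_sub_iff G lam m).mp m.2) fun v hv => congrFun hm ⟨v, hv⟩
  have hdim : Module.finrank ℝ E = Module.finrank ℝ (X → ℝ) := by
    rw [Module.finrank_fintype_fun_eq_card, Fintype.card_coe]
    exact hX.2.1
  obtain ⟨m, hm⟩ :=
    (LinearMap.injective_iff_surjective_of_finrank_eq_finrank hdim).mp hr_inj fun v => f v
  exact ⟨m, (mem_ker_toLin'_adjM_sub_iff G lam m).mp m.2, fun _ hv => congrFun hm ⟨_, hv⟩⟩

lemma eq_zero_of_neighborSet_subset (hX : IsStarSet G lam X) {u : V} (hu : u ∈ X)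
    (hN : G.neighborSet u ⊆ X) : lam = 0 := by
  classical
  obtain ⟨x, hx, hxX⟩ := hX.exists_eigenvector_eqOn (Pi.single u 1)
  have hout : (G.neighborFinset u).filter (· ∉ X) = ∅ :=
    Finset.filter_eq_empty_iff.mpr fun v hv => by simpa using hN (by simpa using hv)
  have h := lam_mul_apply_eq_sum_neighborFinset_filter G hx hxX hu
  rw [hout, Finset.sum_empty, zero_add, Finset.sum_pi_single'] at h
  simpa using h

lemma eq_zero_or_eq_neg_one_of_neighborSet_diff_eq (hX : IsStarSet G lam X) {u w : V}
    (hu : u ∈ X) (hw : w ∈ X) (huw : u ≠ w)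
    (hN : G.neighborSet u \ X = G.neighborSet w \ X) :
    lam = 0 ∨ lam = -1 := by
  classical
  obtain ⟨x, hx, hxX⟩ := hX.exists_eigenvector_eqOn (Pi.single u 1 - Pi.single w 1)
  have hout : (G.neighborFinset u).filter (· ∉ X) = (G.neighborFinset w).filter (· ∉ X) := by
    ext v
    simpa using Set.ext_iff.mp hN v
  have hequ := lam_mul_apply_eq_sum_neighborFinset_filter G hx hxX hu
  have heqw := lam_mul_apply_eq_sum_neighborFinset_filter G hx hxX hw
  rw [← hout] at heqw
  simp only [Finset.sum_sub_distrib, Finset.sum_pi_single', Pi.sub_apply, Finset.mem_filter,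
    mem_neighborFinset, SimpleGraph.irrefl, G.adj_comm w u, hu, hw, and_true,
    Pi.single_eq_same, Pi.single_eq_of_ne huw, Pi.single_eq_of_ne huw.symm, ↓reduceIte,
    sub_zero, zero_sub, mul_one, mul_neg] at hequ heqw
  by_cases hadj : G.Adj u w
  · simp only [hadj, ↓reduceIte] at hequ heqw
    right; linarith
  · simp only [hadj, ↓reduceIte] at hequ heqw
    left; linarith

end IsStarSet

theorem stmt_13 (G : SimpleGraph V) (lam : ℝ) (h0 : lam ≠ 0) (h1 : lam ≠ -1)
    (X : Finset V) (hX : IsStarSet G lam X) :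
    (∀ u ∈ X, (G.neighborSet u \ ↑X).Nonempty) ∧
    (∀ u ∈ X, ∀ w ∈ X, u ≠ w →
      G.neighborSet u \ ↑X ≠ G.neighborSet w \ ↑X) := by
  refine ⟨fun u hu => ?_, fun u hu w hw huw hN => ?_⟩
  · rw [Set.nonempty_iff_ne_empty, Ne, Set.sdiff_eq_empty]
    exact fun hN => h0 (hX.eq_zero_of_neighborSet_subset hu hN)
  · rcases hX.eq_zero_or_eq_neg_one_of_neighborSet_diff_eq hu hw huw hN with h | h
    exacts [h0 h, h1 h]
end
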